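/- Let B = F_2[x,y]/(y² + y + x⁵ + x³ + 1). For every integer n ≥ 1, writing X = x^{2^{n−1}} and Y = y^{2^{n−1}} in B, one has X^{22} + (1+x)(X^{20}+X^{18}+X^{16}) + (x²+x+1)(X^{12}+X^{10}) + X⁹ + xX⁸ + X⁵ + (Y+y)(X⁴+X²) + x² + x = (y+Y⁴)(X⁴+X²) + X^{22} + (x+1)(X^{20}+X^{18}) + (x+1)X^{16} + X^{14} + (x²+x)(X^{12}+X^{10}) + (x+1)X⁸ + x² + x in B. (This is the equality of numerators over the common denominator X^{24} + xX^{16} + (x+1)X⁸ + x² + x proving case (iv) of the Lara Rodríguez–Thakur conjecture: the conjectured formula for the ratio α_{n,1} = ζ_A(q^n−1, q^{n+1}−q^n)/ζ_A(q^{n+1}−1) agrees with the shtuka-theoretic formula; it reduces to the identity Y⁴ + Y = X^{10} + X⁶ + X⁵ + X³ in B.) -/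

import Mathlib

/-!
`B = F₂[x,y]/(y² + y + x⁵ + x³ + 1)`, realised as the quotient of the bivariate
polynomial ring `Polynomial (Polynomial (ZMod 2))` (inner variable `x`, outer
variable `y`) by the ideal generated by the defining relation.
-/

open Polynomial

/-- The coordinate ring `B = F₂[x,y]/(y² + y + x⁵ + x³ + 1)`. -/
abbrev Bfour : Type :=
  Polynomial (Polynomial (ZMod 2)) ⧸
    Ideal.span {(Polynomial.X ^ 2 + Polynomial.X +
      Polynomial.C (Polynomial.X ^ 5 + Polynomial.X ^ 3 + 1) :
        Polynomial (Polynomial (ZMod 2)))}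

/-- The image `x` of the inner variable in `B`. -/
noncomputable def xB : Bfour :=
  Ideal.Quotient.mk _ (Polynomial.C Polynomial.X)

/-- The image `y` of the outer variable in `B`. -/
noncomputable def yB : Bfour :=
  Ideal.Quotient.mk _ Polynomial.X

/-!
In characteristic 2 the map `t ↦ t ^ 2 ^ k` is a ring endomorphism fixing the coefficients of
`y² + y = x⁵ + x³ + 1`, so `X = x ^ 2 ^ (n-1)` and `Y = y ^ 2 ^ (n-1)` satisfy the same relation.
Squaring it and adding it back gives `Y⁴ + Y = X¹⁰ + X⁶ + X⁵ + X³`, and the difference of the two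
sides of the identity is `(X⁴ + X²)(Y⁴ + Y + X¹⁰ + X⁶ + X⁵ + X³)`.
-/

section CharTwo

variable {R : Type*} [CommRing R] [CharP R 2]

lemma curve_relation_pow_two_pow {x y : R} (h : y ^ 2 + y = x ^ 5 + x ^ 3 + 1) (k : ℕ) :
    (y ^ 2 ^ k) ^ 2 + y ^ 2 ^ k = (x ^ 2 ^ k) ^ 5 + (x ^ 2 ^ k) ^ 3 + 1 := by
  simpa only [map_add, map_pow, map_one, iterateFrobenius_def, pow_right_comm _ (2 ^ k)]
    using congrArg (iterateFrobenius R 2 k) h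

lemma pow_four_add_self_of_curve_relation {X Y : R} (h : Y ^ 2 + Y = X ^ 5 + X ^ 3 + 1) :
    Y ^ 4 + Y = X ^ 10 + X ^ 6 + X ^ 5 + X ^ 3 := by
  linear_combination (norm := (ring_nf; simp [CharTwo.two_eq_zero]))
    (Y ^ 2 + Y + X ^ 5 + X ^ 3) * h

lemma numerators_eq_of_pow_four_add_self (x y : R) {X Y : R}
    (h : Y ^ 4 + Y = X ^ 10 + X ^ 6 + X ^ 5 + X ^ 3) :
    X ^ 22 + (1 + x) * (X ^ 20 + X ^ 18 + X ^ 16) +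
          (x ^ 2 + x + 1) * (X ^ 12 + X ^ 10) + X ^ 9 + x * X ^ 8 + X ^ 5 +
          (Y + y) * (X ^ 4 + X ^ 2) + x ^ 2 + x =
      (y + Y ^ 4) * (X ^ 4 + X ^ 2) + X ^ 22 + (x + 1) * (X ^ 20 + X ^ 18) +
        (x + 1) * X ^ 16 + X ^ 14 + (x ^ 2 + x) * (X ^ 12 + X ^ 10) +
        (x + 1) * X ^ 8 + x ^ 2 + x := by
  linear_combination (norm := (ring_nf; simp [CharTwo.two_eq_zero])) (X ^ 4 + X ^ 2) * h

end CharTwo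

instance : Nontrivial Bfour := by
  refine Ideal.Quotient.nontrivial_iff.mpr fun h ↦ ?_
  have hdeg : (X ^ 2 + X + C (X ^ 5 + X ^ 3 + 1) : (ZMod 2)[X][X]).natDegree = 2 := by
    compute_degree!
  have := natDegree_eq_zero_of_isUnit (Ideal.span_singleton_eq_top.mp h)
  omega

instance : CharP Bfour 2 := charP_of_injective_algebraMap' (ZMod 2) 2

lemma yB_sq_add_yB : yB ^ 2 + yB = xB ^ 5 + xB ^ 3 + 1 := by
  have h : Ideal.Quotient.mk _ (X ^ 2 + X + C (X ^ 5 + X ^ 3 + 1) : (ZMod 2)[X][X]) = (0 : Bfour) :=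
    Ideal.Quotient.eq_zero_iff_mem.mpr (Ideal.subset_span rfl)
  have h' : yB ^ 2 + yB + (xB ^ 5 + xB ^ 3 + 1) = 0 := by
    simpa only [xB, yB, map_add, map_pow, map_one, C_add, C_pow, C_1] using h
  exact CharTwo.add_eq_zero.mp h'

theorem statement19_general (n : ℕ) :
    ∀ X Y : Bfour, X = xB ^ 2 ^ (n - 1) → Y = yB ^ 2 ^ (n - 1) →
      X ^ 22 + (1 + xB) * (X ^ 20 + X ^ 18 + X ^ 16) +
            (xB ^ 2 + xB + 1) * (X ^ 12 + X ^ 10) + X ^ 9 + xB * X ^ 8 + X ^ 5 +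
            (Y + yB) * (X ^ 4 + X ^ 2) + xB ^ 2 + xB =
        (yB + Y ^ 4) * (X ^ 4 + X ^ 2) + X ^ 22 + (xB + 1) * (X ^ 20 + X ^ 18) +
          (xB + 1) * X ^ 16 + X ^ 14 + (xB ^ 2 + xB) * (X ^ 12 + X ^ 10) +
          (xB + 1) * X ^ 8 + xB ^ 2 + xB := by
  rintro X Y rfl rfl
  have hXY := curve_relation_pow_two_pow (R := Bfour) yB_sq_add_yB (n - 1)
  exact numerators_eq_of_pow_four_add_self xB yB (pow_four_add_self_of_curve_relation hXY)

/-- for every `n ≥ 1`, with `X = x^{2^{n-1}}` and `Y = y^{2^{n-1}}`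
in `B`,
`X²² + (1+x)(X²⁰+X¹⁸+X¹⁶) + (x²+x+1)(X¹²+X¹⁰) + X⁹ + xX⁸ + X⁵ + (Y+y)(X⁴+X²) + x² + x
 = (y+Y⁴)(X⁴+X²) + X²² + (x+1)(X²⁰+X¹⁸) + (x+1)X¹⁶ + X¹⁴ + (x²+x)(X¹²+X¹⁰) + (x+1)X⁸ + x² + x`. -/
theorem statement19 (n : ℕ) (hn : 1 ≤ n) :
    ∀ X Y : Bfour, X = xB ^ 2 ^ (n - 1) → Y = yB ^ 2 ^ (n - 1) →
      X ^ 22 + (1 + xB) * (X ^ 20 + X ^ 18 + X ^ 16) +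
            (xB ^ 2 + xB + 1) * (X ^ 12 + X ^ 10) + X ^ 9 + xB * X ^ 8 + X ^ 5 +
            (Y + yB) * (X ^ 4 + X ^ 2) + xB ^ 2 + xB =
        (yB + Y ^ 4) * (X ^ 4 + X ^ 2) + X ^ 22 + (xB + 1) * (X ^ 20 + X ^ 18) +
          (xB + 1) * X ^ 16 + X ^ 14 + (xB ^ 2 + xB) * (X ^ 12 + X ^ 10) +
          (xB + 1) * X ^ 8 + xB ^ 2 + xB :=
  statement19_general n
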